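/- Assume the GLM loss and the GLM probability model, and suppose c₀ = sup_{t∈ℝ} ψ̈₀(t) < ∞. Let S ⊆ {1,…,p} with S ⊇ {j : β*_j ≠ 0}, let w ∈ ℝ^p be deterministic with w_j > 0 for j ∉ S, let λ₀ > 0, λ₁ > 0, ε₀ > 0, and set t_j = λ₀ for j ∈ S and t_j = w_j λ₁ for j ∉ S. If Σ_{j=1}^p exp( − n² t_j² / (2σ² c₀ |x_j|₂²) ) ≤ ε₀/2, then P( z*₀ ≤ λ₀ and z*₁ ≤ λ₁ ) ≥ 1 − ε₀, where z*₀ = max_{j∈S} |(z − ψ̇(β*))_j| and z*₁ = max_{j∉S} |(z − ψ̇(β*))_j| / w_j. In particular, if |x_j|₂² = n for all j, w_j = 1 for all j ∉ S, 0 < ε₀ < 1, and λ₀ = λ₁ = λ with λ ≥ σ √( (2c₀/n) log(2p/ε₀) ), then P( max_{1≤j≤p} |(z − ψ̇(β*))_j| ≤ λ ) ≥ 1 − ε₀. -/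

import Mathlib

open MeasureTheory ProbabilityTheory
open scoped NNReal

/-!
Under its exponential-family law, `yᵢ` has moment generating function
`E exp(s yᵢ) = exp((ψ₀(θᵢ + sσ²) - ψ₀(θᵢ))/σ²)`, so the second-order Taylor bound coming from
`ψ̈₀ ≤ c₀` makes `yᵢ - ψ̇₀(θᵢ)` sub-Gaussian with variance proxy `c₀σ²`. By independence,
`n (z - ψ̇(β*))_j = Σᵢ x_{ij} (yᵢ - ψ̇₀(θᵢ))` is sub-Gaussian with proxy `c₀σ²|x_j|₂²`, and the
Chernoff bound on both tails together with a union bound over `j` gives the main estimate. In the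
particular case every column contributes at most `ε₀/p`; when the proxy `c₀σ²n` vanishes the
score is almost surely zero.
-/

theorem apply_add_le_of_hasDerivAt2_le {f f' f'' : ℝ → ℝ} {c : ℝ}
    (hf : ∀ x, HasDerivAt f (f' x) x) (hf' : ∀ x, HasDerivAt f' (f'' x) x)
    (hc : ∀ x, f'' x ≤ c) (x h : ℝ) :
    f (x + h) ≤ f x + h * f' x + c * h ^ 2 / 2 := by
  set g : ℝ → ℝ := fun u ↦ f x + (u - x) * f' x + c * (u - x) ^ 2 / 2 - f u
  set g' : ℝ → ℝ := fun u ↦ f' x + c * (u - x) - f' u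
  have hg : ∀ u, HasDerivAt g (g' u) u := fun u ↦ by
    have := ((((hasDerivAt_id u).sub_const x).mul_const (f' x)).const_add (f x)).add
      ((((hasDerivAt_id u).sub_const x).pow 2).const_mul c |>.div_const 2) |>.sub (hf u)
    exact this.congr_deriv (by simp only [g', id]; ring)
  have hg'_mono : Monotone g' := monotone_of_hasDerivAt_nonneg
    (fun u ↦ (((((hasDerivAt_id u).sub_const x).const_mul c).const_add (f' x)).sub (hf' u)))
    (fun u ↦ by simpa using hc u)
  have hg'x : g' x = 0 := by simp [g']
  have hmin : IsMinOn g Set.univ x := by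
    refine isMinOn_univ_of_deriv (hg x).continuousAt
      (fun u _ ↦ (hg u).differentiableAt.differentiableWithinAt)
      (fun u _ ↦ (hg u).differentiableAt.differentiableWithinAt) (fun u hu ↦ ?_) (fun u hu ↦ ?_)
    · rw [(hg u).deriv, ← hg'x]; exact hg'_mono hu.le
    · rw [(hg u).deriv, ← hg'x]; exact hg'_mono hu.le
  have := hmin (Set.mem_univ (x + h))
  simp only [Set.mem_ofPred_eq, g, sub_self, add_sub_cancel_left] at this
  linarith

theorem ConvexOn.nonneg_of_hasDerivAt2 {f f' f'' : ℝ → ℝ} (hconv : ConvexOn ℝ Set.univ f)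
    (hf : ∀ x, HasDerivAt f (f' x) x) (hf' : ∀ x, HasDerivAt f' (f'' x) x) (x : ℝ) :
    0 ≤ f'' x := by
  have hmono : Monotone f' := by
    have := hconv.monotoneOn_deriv (fun x _ ↦ (hf x).differentiableAt)
    intro a b hab
    simpa [(hf _).deriv] using this (Set.mem_univ a) (Set.mem_univ b) hab
  simpa [(hf' x).deriv] using hmono.deriv_nonneg (x := x)

noncomputable def expFamilyDensity (ψ₀ c : ℝ → ℝ) (σ θ v : ℝ) : ℝ :=
  Real.exp ((θ * v - ψ₀ θ) / σ ^ 2 + c v / σ ^ 2)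

noncomputable def expFamilyMeasure (ν : Measure ℝ) (ψ₀ c : ℝ → ℝ) (σ θ : ℝ) : Measure ℝ :=
  ν.withDensity fun v ↦ ENNReal.ofReal (expFamilyDensity ψ₀ c σ θ v)

section ExpFamily

variable {ν : Measure ℝ} {ψ₀ c : ℝ → ℝ} {σ : ℝ}

theorem exp_mul_expFamilyDensity (hσ : σ ≠ 0) (θ s v : ℝ) :
    Real.exp (s * v) * expFamilyDensity ψ₀ c σ θ v =
      Real.exp ((ψ₀ (θ + s * σ ^ 2) - ψ₀ θ) / σ ^ 2) *
        expFamilyDensity ψ₀ c σ (θ + s * σ ^ 2) v := by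
  simp only [expFamilyDensity, ← Real.exp_add]
  congr 1
  field_simp
  ring

theorem measurable_ofReal_expFamilyDensity (hc : Measurable c) (θ : ℝ) :
    Measurable fun v ↦ ENNReal.ofReal (expFamilyDensity ψ₀ c σ θ v) := by
  unfold expFamilyDensity
  fun_prop

theorem integrable_expFamilyMeasure_iff (hc : Measurable c) (θ : ℝ) {g : ℝ → ℝ} :
    Integrable g (expFamilyMeasure ν ψ₀ c σ θ) ↔
      Integrable (fun v ↦ g v * expFamilyDensity ψ₀ c σ θ v) ν := by
  rw [expFamilyMeasure, integrable_withDensity_iff (measurable_ofReal_expFamilyDensity hc θ)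
    (ae_of_all _ fun _ ↦ ENNReal.ofReal_lt_top)]
  simp_rw [expFamilyDensity, ENNReal.toReal_ofReal (Real.exp_nonneg _)]

theorem integral_expFamilyMeasure (hc : Measurable c) (θ : ℝ) (g : ℝ → ℝ) :
    ∫ v, g v ∂expFamilyMeasure ν ψ₀ c σ θ = ∫ v, g v * expFamilyDensity ψ₀ c σ θ v ∂ν := by
  rw [expFamilyMeasure, integral_withDensity_eq_integral_toReal_smul
    (measurable_ofReal_expFamilyDensity hc θ) (ae_of_all _ fun _ ↦ ENNReal.ofReal_lt_top)]
  simp_rw [expFamilyDensity, ENNReal.toReal_ofReal (Real.exp_nonneg _), smul_eq_mul, mul_comm]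

theorem integrable_exp_mul_expFamilyMeasure (hσ : σ ≠ 0) (hc : Measurable c)
    (hnorm : ∀ θ, ∫ v, expFamilyDensity ψ₀ c σ θ v ∂ν = 1) (θ s : ℝ) :
    Integrable (fun v ↦ Real.exp (s * v)) (expFamilyMeasure ν ψ₀ c σ θ) := by
  rw [integrable_expFamilyMeasure_iff hc, funext (exp_mul_expFamilyDensity hσ θ s)]
  refine (Integrable.of_integral_ne_zero ?_).const_mul _
  rw [hnorm]
  exact one_ne_zero

theorem mgf_id_expFamilyMeasure (hσ : σ ≠ 0) (hc : Measurable c)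
    (hnorm : ∀ θ, ∫ v, expFamilyDensity ψ₀ c σ θ v ∂ν = 1) (θ s : ℝ) :
    mgf id (expFamilyMeasure ν ψ₀ c σ θ) s = Real.exp ((ψ₀ (θ + s * σ ^ 2) - ψ₀ θ) / σ ^ 2) := by
  rw [mgf, integral_expFamilyMeasure hc]
  simp_rw [id, exp_mul_expFamilyDensity hσ]
  rw [integral_const_mul, hnorm, mul_one]

theorem hasSubgaussianMGF_expFamilyMeasure {dψ₀ ddψ₀ : ℝ → ℝ} {c₀ : ℝ} (hσ : σ ≠ 0)
    (hc : Measurable c) (hnorm : ∀ θ, ∫ v, expFamilyDensity ψ₀ c σ θ v ∂ν = 1)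
    (hd1 : ∀ t, HasDerivAt ψ₀ (dψ₀ t) t) (hd2 : ∀ t, HasDerivAt dψ₀ (ddψ₀ t) t)
    (hc₀ : ∀ t, ddψ₀ t ≤ c₀) (θ : ℝ) :
    HasSubgaussianMGF (fun v ↦ v - dψ₀ θ) (c₀ * σ ^ 2).toNNReal (expFamilyMeasure ν ψ₀ c σ θ) where
  integrable_exp_mul t := by
    simp_rw [mul_sub, Real.exp_sub]
    exact (integrable_exp_mul_expFamilyMeasure hσ hc hnorm θ t).div_const _
  mgf_le t := by
    have hσ2 : 0 < σ ^ 2 := by positivity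
    have htaylor := apply_add_le_of_hasDerivAt2_le hd1 hd2 hc₀ θ (t * σ ^ 2)
    change mgf (fun v ↦ id v + -dψ₀ θ) _ t ≤ _
    rw [mgf_add_const, mgf_id_expFamilyMeasure hσ hc hnorm, ← Real.exp_add, Real.exp_le_exp,
      Real.coe_toNNReal', div_add' _ _ _ hσ2.ne', div_le_iff₀ hσ2]
    nlinarith [le_max_left (c₀ * σ ^ 2) 0]

theorem hasSubgaussianMGF_sum_mul_sub_deriv {Ω : Type*} {mΩ : MeasurableSpace Ω}
    {P : Measure Ω} {n : ℕ} {dψ₀ ddψ₀ : ℝ → ℝ} {c₀ : ℝ} (hσ : σ ≠ 0)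
    (hc : Measurable c) (hnorm : ∀ θ, ∫ v, expFamilyDensity ψ₀ c σ θ v ∂ν = 1)
    (hd1 : ∀ t, HasDerivAt ψ₀ (dψ₀ t) t) (hd2 : ∀ t, HasDerivAt dψ₀ (ddψ₀ t) t)
    (hc₀ : ∀ t, ddψ₀ t ≤ c₀)
    {θ : Fin n → ℝ} {y : Ω → Fin n → ℝ} (hmeas : ∀ i, Measurable fun ω ↦ y ω i)
    (hindep : iIndepFun (fun i ω ↦ y ω i) P)
    (hlaw : ∀ i, P.map (fun ω ↦ y ω i) = expFamilyMeasure ν ψ₀ c σ (θ i)) (a : Fin n → ℝ) :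
    HasSubgaussianMGF (fun ω ↦ ∑ i, a i * (y ω i - dψ₀ (θ i)))
      (c₀ * σ ^ 2 * ∑ i, a i ^ 2).toNNReal P := by
  have hy : ∀ i, HasSubgaussianMGF (fun ω ↦ y ω i - dψ₀ (θ i)) (c₀ * σ ^ 2).toNNReal P :=
    fun i ↦ HasSubgaussianMGF.of_map (X := fun v ↦ v - dψ₀ (θ i)) (hmeas i).aemeasurable
      (hlaw i ▸ hasSubgaussianMGF_expFamilyMeasure hσ hc hnorm hd1 hd2 hc₀ (θ i))
  have hsum := HasSubgaussianMGF.sum_of_iIndepFun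
    (X := fun i ω ↦ a i * (y ω i - dψ₀ (θ i)))
    (hindep.comp (fun i v ↦ a i * (v - dψ₀ (θ i))) fun i ↦ by fun_prop)
    (s := Finset.univ) fun i _ ↦ (hy i).const_mul (a i)
  convert hsum using 1
  ext
  rw [NNReal.coe_sum]
  -- `const_mul` states its proxy as the anonymous constructor `⟨a i ^ 2, _⟩ * c`, which the
  -- coercion lemmas do not see through.
  change max _ 0 = ∑ i, a i ^ 2 * max (c₀ * σ ^ 2) 0
  rw [← Finset.sum_mul, mul_comm,
    mul_max_of_nonneg _ _ (Finset.sum_nonneg fun i _ ↦ sq_nonneg (a i)), mul_zero]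

end ExpFamily

namespace ProbabilityTheory.HasSubgaussianMGF

variable {Ω : Type*} {mΩ : MeasurableSpace Ω} {μ : Measure Ω} {X : Ω → ℝ} {c : ℝ≥0}

theorem measureReal_le_abs_le (h : HasSubgaussianMGF X c μ) {ε : ℝ}
    (hε : 0 ≤ ε) : μ.real {ω | ε ≤ |X ω|} ≤ 2 * Real.exp (-ε ^ 2 / (2 * c)) := by
  have hsplit : {ω | ε ≤ |X ω|} = {ω | ε ≤ X ω} ∪ {ω | ε ≤ (-X) ω} := by
    ext ω
    simp only [Set.mem_ofPred_eq, Set.mem_union, Pi.neg_apply, le_abs]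
  rw [hsplit]
  linarith [measureReal_union_le (μ := μ) {ω | ε ≤ X ω} {ω | ε ≤ (-X) ω},
    h.measure_ge_le hε, h.neg.measure_ge_le hε]

theorem measureReal_lt_abs_le_two_mul_exp_neg [IsFiniteMeasure μ]
    (h : HasSubgaussianMGF X c μ) {s L : ℝ} (hs : 0 ≤ s) (hL : 0 < c → L ≤ s ^ 2 / (2 * c)) :
    μ.real {ω | s < |X ω|} ≤ 2 * Real.exp (-L) := by
  rcases eq_zero_or_pos c with rfl | hc
  · have hnull : μ {ω | s < |X ω|} = 0 :=
      measure_mono_null (fun ω (hω : s < |X ω|) (hzero : X ω = (0 : Ω → ℝ) ω) ↦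
        (hω.trans_le (by rw [hzero, Pi.zero_apply, abs_zero])).not_ge hs)
        (ae_iff.1 h.ae_eq_zero_of_hasSubgaussianMGF_zero)
    rw [measureReal_def, hnull, ENNReal.toReal_zero]
    positivity
  · calc μ.real {ω | s < |X ω|} ≤ μ.real {ω | s ≤ |X ω|} :=
          measureReal_mono fun ω (hω : s < |X ω|) ↦ hω.le
      _ ≤ 2 * Real.exp (-s ^ 2 / (2 * c)) := h.measureReal_le_abs_le hs
      _ ≤ 2 * Real.exp (-L) := by
          rw [neg_div]
          gcongr
          exact hL hc

end ProbabilityTheory.HasSubgaussianMGF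

section UnionBound

variable {Ω ι : Type*} {mΩ : MeasurableSpace Ω} {μ : Measure Ω} [IsProbabilityMeasure μ]
  [Fintype ι] {Z : ι → Ω → ℝ}

theorem ofReal_one_sub_sum_le_measure_forall_abs_le {s δ : ι → ℝ}
    (h : ∀ j, μ.real {ω | s j < |Z j ω|} ≤ δ j) :
    ENNReal.ofReal (1 - ∑ j, δ j) ≤ μ {ω | ∀ j, |Z j ω| ≤ s j} := by
  rw [← ofReal_measureReal]
  refine ENNReal.ofReal_le_ofReal ?_
  have hcompl : {ω | ∀ j, |Z j ω| ≤ s j}ᶜ = ⋃ j, {ω | s j < |Z j ω|} := by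
    ext ω
    simp
  have hbad : μ.real {ω | ∀ j, |Z j ω| ≤ s j}ᶜ ≤ ∑ j, δ j := by
    rw [hcompl]
    exact (measureReal_iUnion_fintype_le _).trans (Finset.sum_le_sum fun j _ ↦ h j)
  have hunion := measureReal_union_le (μ := μ) {ω | ∀ j, |Z j ω| ≤ s j} {ω | ∀ j, |Z j ω| ≤ s j}ᶜ
  rw [Set.union_compl_self, probReal_univ] at hunion
  linarith

theorem ofReal_one_sub_le_measure_forall_abs_le {c : ι → ℝ≥0}
    (hZ : ∀ j, HasSubgaussianMGF (Z j) (c j) μ) {s : ι → ℝ} (hs : ∀ j, 0 ≤ s j) {ε : ℝ}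
    (hε : 2 * ∑ j, Real.exp (-(s j ^ 2 / (2 * c j))) ≤ ε) :
    ENNReal.ofReal (1 - ε) ≤ μ {ω | ∀ j, |Z j ω| ≤ s j} := by
  refine (ENNReal.ofReal_le_ofReal ?_).trans (ofReal_one_sub_sum_le_measure_forall_abs_le
    fun j ↦ (hZ j).measureReal_lt_abs_le_two_mul_exp_neg (hs j) fun _ ↦ le_rfl)
  rw [← Finset.mul_sum]
  linarith

theorem ofReal_one_sub_le_measure_forall_abs_le_of_log_le {c : ℝ≥0}
    (hZ : ∀ j, HasSubgaussianMGF (Z j) c μ) {s ε : ℝ} (hs : 0 ≤ s) (hε : 0 < ε)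
    (h : 0 < c → Real.log (2 * Fintype.card ι / ε) ≤ s ^ 2 / (2 * c)) :
    ENNReal.ofReal (1 - ε) ≤ μ {ω | ∀ j, |Z j ω| ≤ s} := by
  have hterm : ∀ j, μ.real {ω | s < |Z j ω|} ≤ ε / Fintype.card ι := fun j ↦ by
    have hcard : (0 : ℝ) < Fintype.card ι := Nat.cast_pos.2 (Fintype.card_pos_iff.2 ⟨j⟩)
    calc μ.real {ω | s < |Z j ω|} ≤ 2 * Real.exp (-Real.log (2 * Fintype.card ι / ε)) :=
          (hZ j).measureReal_lt_abs_le_two_mul_exp_neg hs h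
      _ = ε / Fintype.card ι := by
          rw [Real.exp_neg, Real.exp_log (by positivity)]
          field_simp
  refine (ENNReal.ofReal_le_ofReal (sub_le_sub_left ?_ 1)).trans
    (ofReal_one_sub_sum_le_measure_forall_abs_le hterm)
  rw [Finset.sum_const, Finset.card_univ, nsmul_eq_mul]
  rcases (Fintype.card ι).eq_zero_or_pos with hzero | hpos
  · simp [hzero, hε.le]
  · rw [mul_div_cancel₀ _ (by positivity)]

end UnionBound

theorem abs_inv_mul_sum_sub_le {n : ℕ} (a y m : Fin n → ℝ) {t : ℝ} (ht : 0 ≤ t)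
    (h : |∑ i, a i * (y i - m i)| ≤ n * t) :
    |(n : ℝ)⁻¹ * ∑ i, a i * y i - (n : ℝ)⁻¹ * ∑ i, a i * m i| ≤ t := by
  rcases n.eq_zero_or_pos with rfl | hn
  · simpa using ht
  rw [← mul_sub, ← Finset.sum_sub_distrib, abs_mul, abs_inv, Nat.abs_cast,
    inv_mul_le_iff₀ (by positivity)]
  simpa only [mul_sub] using h

theorem le_sq_div_of_mul_sqrt_le {σ c N L lam : ℝ} (hσ : 0 < σ) (hc : 0 < c) (hN : 0 < N)
    (h : σ * √(2 * c / N * L) ≤ lam) : L ≤ (N * lam) ^ 2 / (2 * (c * σ ^ 2 * N)) := by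
  rcases le_or_gt L 0 with hL | hL
  · exact hL.trans (by positivity)
  have hsq : σ ^ 2 * (2 * c / N * L) ≤ lam ^ 2 := by
    have := pow_le_pow_left₀ (by positivity) h 2
    rwa [mul_pow, Real.sq_sqrt (by positivity)] at this
  rw [le_div_iff₀ (by positivity)]
  field_simp at hsq
  nlinarith

section Score

variable {Ω : Type*} {mΩ : MeasurableSpace Ω} {P : Measure Ω} [IsProbabilityMeasure P]
  {n p : ℕ} {X : Fin n → Fin p → ℝ} {y : Ω → Fin n → ℝ} {m : Fin n → ℝ} {c₀ σ : ℝ}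

theorem ofReal_one_sub_le_measure_forall_abs_score_le (hc₀ : 0 ≤ c₀)
    (hZ : ∀ j, HasSubgaussianMGF (fun ω ↦ ∑ i, X i j * (y ω i - m i))
      (c₀ * σ ^ 2 * ∑ i, X i j ^ 2).toNNReal P)
    {t : Fin p → ℝ} (ht : ∀ j, 0 ≤ t j) {ε : ℝ}
    (hε : 2 * ∑ j, Real.exp (-((n : ℝ) ^ 2 * t j ^ 2) / (2 * σ ^ 2 * c₀ * ∑ i, X i j ^ 2)) ≤ ε) :
    ENNReal.ofReal (1 - ε) ≤
      P {ω | ∀ j, |(n : ℝ)⁻¹ * ∑ i, X i j * y ω i - (n : ℝ)⁻¹ * ∑ i, X i j * m i| ≤ t j} := by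
  refine (ofReal_one_sub_le_measure_forall_abs_le hZ (fun j ↦ mul_nonneg n.cast_nonneg (ht j))
    ?_).trans (measure_mono fun ω hω j ↦ abs_inv_mul_sum_sub_le _ _ _ (ht j) (hω j))
  convert hε using 4 with j
  rw [Real.coe_toNNReal _ (by positivity)]
  ring

theorem ofReal_one_sub_le_measure_forall_abs_score_le_of_sqrt_log_le (hc₀ : 0 ≤ c₀)
    (hZ : ∀ j, HasSubgaussianMGF (fun ω ↦ ∑ i, X i j * (y ω i - m i))
      (c₀ * σ ^ 2 * ∑ i, X i j ^ 2).toNNReal P)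
    (hσ : 0 < σ) (hX : ∀ j, ∑ i, X i j ^ 2 = n) {ε lam : ℝ} (hε : 0 < ε)
    (hlam : σ * √(2 * c₀ / n * Real.log (2 * p / ε)) ≤ lam) :
    ENNReal.ofReal (1 - ε) ≤
      P {ω | ∀ j, |(n : ℝ)⁻¹ * ∑ i, X i j * y ω i - (n : ℝ)⁻¹ * ∑ i, X i j * m i| ≤ lam} := by
  have hlam_nonneg : 0 ≤ lam := (mul_nonneg hσ.le (Real.sqrt_nonneg _)).trans hlam
  refine (ofReal_one_sub_le_measure_forall_abs_le_of_log_le (c := (c₀ * σ ^ 2 * n).toNNReal)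
    (fun j ↦ by simpa only [hX j] using hZ j) (mul_nonneg n.cast_nonneg hlam_nonneg) hε
    fun hpos ↦ ?_).trans
      (measure_mono fun ω hω j ↦ abs_inv_mul_sum_sub_le _ _ _ hlam_nonneg (hω j))
  rw [Real.toNNReal_pos] at hpos
  rw [Real.coe_toNNReal _ hpos.le, Fintype.card_fin]
  have hn : 0 < (n : ℝ) := pos_of_mul_pos_right hpos (by positivity)
  have hc₀_pos : 0 < c₀ :=
    pos_of_mul_pos_left (pos_of_mul_pos_left hpos n.cast_nonneg) (sq_nonneg σ)
  exact le_sq_div_of_mul_sqrt_le hσ hc₀_pos hn hlam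

end Score

theorem stmt_8_general (n p : ℕ)
    (X : Fin n → Fin p → ℝ)
    (ψ₀ dψ₀ ddψ₀ : ℝ → ℝ)
    (hψ₀conv : ConvexOn ℝ Set.univ ψ₀)
    (hd1 : ∀ t, HasDerivAt ψ₀ (dψ₀ t) t)
    (hd2 : ∀ t, HasDerivAt dψ₀ (ddψ₀ t) t)
    (βs : Fin p → ℝ)
    (c₀ : ℝ) (hc₀ : IsLUB (Set.range ddψ₀) c₀)
    -- the GLM probability model
    (σ : ℝ) (hσ : 0 < σ)
    (cc : ℝ → ℝ) (hcc : Measurable cc)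
    (ν : Measure ℝ)
    (hnorm : ∀ θ : ℝ,
        ∫ v, Real.exp ((θ * v - ψ₀ θ) / σ ^ 2 + cc v / σ ^ 2) ∂ν = 1)
    (Ω : Type) (mΩ : MeasurableSpace Ω) (P : Measure Ω) [IsProbabilityMeasure P]
    (y : Ω → Fin n → ℝ) (hmeas : ∀ i, Measurable fun ω => y ω i)
    (hindep : iIndepFun (fun i ω => y ω i) P)
    (hlaw : ∀ i, Measure.map (fun ω => y ω i) P =
        ν.withDensity (fun v => ENNReal.ofReal (Real.exp
          (((∑ k, X i k * βs k) * v - ψ₀ (∑ k, X i k * βs k)) / σ ^ 2 + cc v / σ ^ 2))))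
    (S : Finset (Fin p))
    (w : Fin p → ℝ) (hwpos : ∀ j ∉ S, 0 < w j) :
    -- (i) the main bound under (lm-2-cond-2)
    (∀ lam0 lam1 ε₀ : ℝ, 0 < lam0 → 0 < lam1 → 0 < ε₀ →
      (∑ j, Real.exp (-((n : ℝ) ^ 2 * (if j ∈ S then lam0 else w j * lam1) ^ 2) /
          (2 * σ ^ 2 * c₀ * ∑ i, X i j ^ 2)) ≤ ε₀ / 2) →
      ENNReal.ofReal (1 - ε₀) ≤
        P {ω | (∀ j ∈ S,
            |(n : ℝ)⁻¹ * ∑ i, X i j * y ω i -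
              (n : ℝ)⁻¹ * ∑ i, X i j * dψ₀ (∑ k, X i k * βs k)| ≤ lam0) ∧
          ∀ j ∉ S,
            |(n : ℝ)⁻¹ * ∑ i, X i j * y ω i -
              (n : ℝ)⁻¹ * ∑ i, X i j * dψ₀ (∑ k, X i k * βs k)| / w j ≤ lam1}) ∧
    -- (ii) the particular case
    (∀ lam ε₀ : ℝ, (∀ j, ∑ i, X i j ^ 2 = (n : ℝ)) → (∀ j ∉ S, w j = 1) →
      0 < ε₀ → ε₀ < 1 →
      σ * Real.sqrt ((2 * c₀ / (n : ℝ)) * Real.log (2 * (p : ℝ) / ε₀)) ≤ lam →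
      ENNReal.ofReal (1 - ε₀) ≤
        P {ω | ∀ j,
          |(n : ℝ)⁻¹ * ∑ i, X i j * y ω i -
            (n : ℝ)⁻¹ * ∑ i, X i j * dψ₀ (∑ k, X i k * βs k)| ≤ lam}) := by
  have hub : ∀ t, ddψ₀ t ≤ c₀ := fun t ↦ hc₀.1 ⟨t, rfl⟩
  have hc₀_nonneg : 0 ≤ c₀ := (hψ₀conv.nonneg_of_hasDerivAt2 hd1 hd2 0).trans (hub 0)
  have hZ := fun j ↦ hasSubgaussianMGF_sum_mul_sub_deriv hσ.ne' hcc hnorm hd1 hd2 hub hmeas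
    hindep hlaw (fun i ↦ X i j)
  refine ⟨fun lam0 lam1 ε₀ hlam0 hlam1 hε₀ hsum ↦ ?_, fun lam ε₀ hXn _ hε₀ _ hlam ↦
    ofReal_one_sub_le_measure_forall_abs_score_le_of_sqrt_log_le hc₀_nonneg hZ hσ hXn hε₀ hlam⟩
  have ht : ∀ j, 0 ≤ if j ∈ S then lam0 else w j * lam1 := fun j ↦ by
    split_ifs with hj
    exacts [hlam0.le, (mul_pos (hwpos j hj) hlam1).le]
  refine (ofReal_one_sub_le_measure_forall_abs_score_le hc₀_nonneg hZ ht (by linarith)).trans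
    (measure_mono fun ω hω ↦ ⟨fun j hj ↦ by simpa [hj] using hω j, fun j hj ↦ ?_⟩)
  rw [div_le_iff₀ (hwpos j hj), mul_comm lam1]
  simpa [hj] using hω j

theorem stmt_8 (n p : ℕ) (hn : 1 ≤ n) (hp : 1 ≤ p)
    (X : Fin n → Fin p → ℝ)
    (ψ₀ dψ₀ ddψ₀ : ℝ → ℝ)
    (hψ₀conv : ConvexOn ℝ Set.univ ψ₀)
    (hd1 : ∀ t, HasDerivAt ψ₀ (dψ₀ t) t)
    (hd2 : ∀ t, HasDerivAt dψ₀ (ddψ₀ t) t)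
    (βs : Fin p → ℝ)
    (c₀ : ℝ) (hc₀ : IsLUB (Set.range ddψ₀) c₀)
    -- the GLM probability model
    (σ : ℝ) (hσ : 0 < σ)
    (cc : ℝ → ℝ) (hcc : Measurable cc)
    (ν : Measure ℝ) [SigmaFinite ν]
    (hnorm : ∀ θ : ℝ,
        ∫ v, Real.exp ((θ * v - ψ₀ θ) / σ ^ 2 + cc v / σ ^ 2) ∂ν = 1)
    (Ω : Type) (mΩ : MeasurableSpace Ω) (P : Measure Ω) [IsProbabilityMeasure P]
    (y : Ω → Fin n → ℝ) (hmeas : ∀ i, Measurable fun ω => y ω i)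
    (hindep : iIndepFun (fun i ω => y ω i) P)
    (hlaw : ∀ i, Measure.map (fun ω => y ω i) P =
        ν.withDensity (fun v => ENNReal.ofReal (Real.exp
          (((∑ k, X i k * βs k) * v - ψ₀ (∑ k, X i k * βs k)) / σ ^ 2 + cc v / σ ^ 2))))
    (S : Finset (Fin p)) (hS : ∀ j, βs j ≠ 0 → j ∈ S)
    (w : Fin p → ℝ) (hw : ∀ j, 0 ≤ w j) (hwpos : ∀ j ∉ S, 0 < w j) :
    -- (i) the main bound under (lm-2-cond-2)
    (∀ lam0 lam1 ε₀ : ℝ, 0 < lam0 → 0 < lam1 → 0 < ε₀ →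
      (∑ j, Real.exp (-((n : ℝ) ^ 2 * (if j ∈ S then lam0 else w j * lam1) ^ 2) /
          (2 * σ ^ 2 * c₀ * ∑ i, X i j ^ 2)) ≤ ε₀ / 2) →
      ENNReal.ofReal (1 - ε₀) ≤
        P {ω | (∀ j ∈ S,
            |(n : ℝ)⁻¹ * ∑ i, X i j * y ω i -
              (n : ℝ)⁻¹ * ∑ i, X i j * dψ₀ (∑ k, X i k * βs k)| ≤ lam0) ∧
          ∀ j ∉ S,
            |(n : ℝ)⁻¹ * ∑ i, X i j * y ω i -
              (n : ℝ)⁻¹ * ∑ i, X i j * dψ₀ (∑ k, X i k * βs k)| / w j ≤ lam1}) ∧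
    -- (ii) the particular case
    (∀ lam ε₀ : ℝ, (∀ j, ∑ i, X i j ^ 2 = (n : ℝ)) → (∀ j ∉ S, w j = 1) →
      0 < ε₀ → ε₀ < 1 →
      σ * Real.sqrt ((2 * c₀ / (n : ℝ)) * Real.log (2 * (p : ℝ) / ε₀)) ≤ lam →
      ENNReal.ofReal (1 - ε₀) ≤
        P {ω | ∀ j,
          |(n : ℝ)⁻¹ * ∑ i, X i j * y ω i -
            (n : ℝ)⁻¹ * ∑ i, X i j * dψ₀ (∑ k, X i k * βs k)| ≤ lam}) :=
  stmt_8_general n p X ψ₀ dψ₀ ddψ₀ hψ₀conv hd1 hd2 βs c₀ hc₀ σ hσ cc hcc ν hnorm Ω mΩ P y hmeas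
    hindep hlaw S w hwpos
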